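/- (Covariant-to-evolutionary Noether bridge.) With B = 0 and C = A-1, the global discrete Noether quantity satisfies 𝒥_{0,A-1}^{K,L}(φ_d) = Σ_{j=K+1}^{L} (J¹(j¹φ_d(Δ_0^j)) + J²(j¹φ_d(Δ_0^{j-1})) + J³(j¹φ_d(Δ_{A-1}^j))) + 𝖩⁺_{L_d}(𝛗^L, 𝛗^{L+1}) - 𝖩⁻_{L_d}(𝛗^K, 𝛗^{K+1}), where 𝖩⁺_{L_d}, 𝖩⁻_{L_d} are the discrete momentum maps of the time-evolution Lagrangian L_d(𝛗^j,𝛗^{j+1}) = Σ_{a=0}^{A-1} 𝓛_a^j. -/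

import Mathlib

noncomputable section

variable {V : Type*} [NormedAddCommGroup V] [NormedSpace ℝ V] {𝔤 : Type*}

/-- Partial differential of `𝓛 : V³ → ℝ` in its first slot. -/
def T1 (L : V × V × V → ℝ) (p : V × V × V) : V →L[ℝ] ℝ :=
  fderiv ℝ (fun x => L (x, p.2.1, p.2.2)) p.1

/-- Partial differential of `𝓛 : V³ → ℝ` in its second slot. -/
def T2 (L : V × V × V → ℝ) (p : V × V × V) : V →L[ℝ] ℝ :=
  fderiv ℝ (fun x => L (p.1, x, p.2.2)) p.2.1

/-- Partial differential of `𝓛 : V³ → ℝ` in its third slot. -/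
def T3 (L : V × V × V → ℝ) (p : V × V × V) : V →L[ℝ] ℝ :=
  fderiv ℝ (fun x => L (p.1, p.2.1, x)) p.2.2

/-- Partial differential of `L : E × F → ℝ` in the first factor. -/
def pD1 {E F : Type*} [NormedAddCommGroup E] [NormedSpace ℝ E]
    [NormedAddCommGroup F] [NormedSpace ℝ F]
    (L : E × F → ℝ) (p : E × F) : E →L[ℝ] ℝ :=
  fderiv ℝ (fun x => L (x, p.2)) p.1

/-- Partial differential of `L : E × F → ℝ` in the second factor. -/
def pD2 {E F : Type*} [NormedAddCommGroup E] [NormedSpace ℝ E]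
    [NormedAddCommGroup F] [NormedSpace ℝ F]
    (L : E × F → ℝ) (p : E × F) : F →L[ℝ] ℝ :=
  fderiv ℝ (fun y => L (p.1, y)) p.2

lemma T1_apply (L : V × V × V → ℝ) (hL : Differentiable ℝ L) (p : V × V × V) (v : V) :
    T1 L p v = fderiv ℝ L p (v, 0, 0) := by
  have hm : HasFDerivAt (fun x : V => (x, p.2.1, p.2.2))
      ((ContinuousLinearMap.id ℝ V).prod (0 : V →L[ℝ] V × V)) p.1 :=
    HasFDerivAt.prodMk (hasFDerivAt_id p.1) (hasFDerivAt_const _ _)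
  have h : HasFDerivAt (fun x : V => L (x, p.2.1, p.2.2))
      ((fderiv ℝ L p).comp ((ContinuousLinearMap.id ℝ V).prod (0 : V →L[ℝ] V × V))) p.1 :=
    ((hL p).hasFDerivAt).comp p.1 hm
  rw [T1, h.fderiv]
  simp [ContinuousLinearMap.comp_apply, ContinuousLinearMap.prod_apply, Prod.mk.injEq]
  rfl

lemma T2_apply (L : V × V × V → ℝ) (hL : Differentiable ℝ L) (p : V × V × V) (v : V) :
    T2 L p v = fderiv ℝ L p (0, v, 0) := by
  have hm : HasFDerivAt (fun x : V => (p.1, x, p.2.2))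
      ((0 : V →L[ℝ] V).prod ((ContinuousLinearMap.id ℝ V).prod (0 : V →L[ℝ] V))) p.2.1 :=
    HasFDerivAt.prodMk (hasFDerivAt_const _ _) (HasFDerivAt.prodMk (hasFDerivAt_id _) (hasFDerivAt_const _ _))
  have h : HasFDerivAt (fun x : V => L (p.1, x, p.2.2))
      ((fderiv ℝ L p).comp ((0 : V →L[ℝ] V).prod ((ContinuousLinearMap.id ℝ V).prod (0 : V →L[ℝ] V)))) p.2.1 :=
    ((hL p).hasFDerivAt).comp p.2.1 hm
  rw [T2, h.fderiv]
  simp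

lemma T3_apply (L : V × V × V → ℝ) (hL : Differentiable ℝ L) (p : V × V × V) (v : V) :
    T3 L p v = fderiv ℝ L p (0, 0, v) := by
  have hm : HasFDerivAt (fun x : V => (p.1, p.2.1, x))
      ((0 : V →L[ℝ] V).prod ((0 : V →L[ℝ] V).prod (ContinuousLinearMap.id ℝ V))) p.2.2 :=
    HasFDerivAt.prodMk (hasFDerivAt_const _ _) (HasFDerivAt.prodMk (hasFDerivAt_const _ _) (hasFDerivAt_id _))
  have h : HasFDerivAt (fun x : V => L (p.1, p.2.1, x))
      ((fderiv ℝ L p).comp ((0 : V →L[ℝ] V).prod ((0 : V →L[ℝ] V).prod (ContinuousLinearMap.id ℝ V)))) p.2.2 :=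
    ((hL p).hasFDerivAt).comp p.2.2 hm
  rw [T3, h.fderiv]
  simp

lemma pD2_sum_apply (A : ℕ) (Lag : ℕ → V × V × V → ℝ) (hLag : ∀ a, Differentiable ℝ (Lag a))
    (x y v : Fin (A + 1) → V) :
    pD2 (fun p : (Fin (A + 1) → V) × (Fin (A + 1) → V) =>
        ∑ a : Fin A, Lag a.1 (p.1 a.castSucc, p.2 a.castSucc, p.1 a.succ)) (x, y) v
      = ∑ a : Fin A, T2 (Lag a.1) (x a.castSucc, y a.castSucc, x a.succ) (v a.castSucc) := by
  have hterm : ∀ a : Fin A,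
      HasFDerivAt (fun y' : Fin (A + 1) → V => Lag a.1 (x a.castSucc, y' a.castSucc, x a.succ))
        ((fderiv ℝ (Lag a.1) (x a.castSucc, y a.castSucc, x a.succ)).comp
          ((0 : (Fin (A + 1) → V) →L[ℝ] V).prod
            ((ContinuousLinearMap.proj a.castSucc).prod (0 : (Fin (A + 1) → V) →L[ℝ] V)))) y := by
    intro a
    have hm : HasFDerivAt (fun y' : Fin (A + 1) → V => (x a.castSucc, y' a.castSucc, x a.succ))
        ((0 : (Fin (A + 1) → V) →L[ℝ] V).prod
          ((ContinuousLinearMap.proj a.castSucc).prod (0 : (Fin (A + 1) → V) →L[ℝ] V))) y :=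
      HasFDerivAt.prodMk (hasFDerivAt_const _ _)
        (HasFDerivAt.prodMk ((ContinuousLinearMap.proj (R := ℝ) (φ := fun _ : Fin (A+1) => V) a.castSucc).hasFDerivAt)
          (hasFDerivAt_const _ _))
    exact ((hLag a.1 _).hasFDerivAt).comp y hm
  have hsum := HasFDerivAt.fun_sum (fun a (_ : a ∈ Finset.univ) => hterm a)
  rw [pD2, hsum.fderiv]
  rw [ContinuousLinearMap.sum_apply]
  refine Finset.sum_congr rfl fun a _ => ?_
  rw [T2_apply _ (hLag a.1)]
  simp

lemma pD1_sum_apply (A : ℕ) (Lag : ℕ → V × V × V → ℝ) (hLag : ∀ a, Differentiable ℝ (Lag a))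
    (x y v : Fin (A + 1) → V) :
    pD1 (fun p : (Fin (A + 1) → V) × (Fin (A + 1) → V) =>
        ∑ a : Fin A, Lag a.1 (p.1 a.castSucc, p.2 a.castSucc, p.1 a.succ)) (x, y) v
      = ∑ a : Fin A, (T1 (Lag a.1) (x a.castSucc, y a.castSucc, x a.succ) (v a.castSucc)
          + T3 (Lag a.1) (x a.castSucc, y a.castSucc, x a.succ) (v a.succ)) := by
  have hterm : ∀ a : Fin A,
      HasFDerivAt (fun x' : Fin (A + 1) → V => Lag a.1 (x' a.castSucc, y a.castSucc, x' a.succ))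
        ((fderiv ℝ (Lag a.1) (x a.castSucc, y a.castSucc, x a.succ)).comp
          ((ContinuousLinearMap.proj a.castSucc).prod
            ((0 : (Fin (A + 1) → V) →L[ℝ] V).prod (ContinuousLinearMap.proj a.succ)))) x := by
    intro a
    have hm : HasFDerivAt (fun x' : Fin (A + 1) → V => (x' a.castSucc, y a.castSucc, x' a.succ))
        ((ContinuousLinearMap.proj a.castSucc).prod
          ((0 : (Fin (A + 1) → V) →L[ℝ] V).prod (ContinuousLinearMap.proj a.succ))) x :=
      HasFDerivAt.prodMk ((ContinuousLinearMap.proj (R := ℝ) (φ := fun _ : Fin (A+1) => V) a.castSucc).hasFDerivAt)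
        (HasFDerivAt.prodMk (hasFDerivAt_const _ _)
          ((ContinuousLinearMap.proj (R := ℝ) (φ := fun _ : Fin (A+1) => V) a.succ).hasFDerivAt))
    exact ((hLag a.1 _).hasFDerivAt).comp x hm
  have hsum := HasFDerivAt.fun_sum (fun a (_ : a ∈ Finset.univ) => hterm a)
  rw [pD1, hsum.fderiv]
  rw [ContinuousLinearMap.sum_apply]
  refine Finset.sum_congr rfl fun a _ => ?_
  rw [T1_apply _ (hLag a.1), T3_apply _ (hLag a.1)]
  simp only [ContinuousLinearMap.comp_apply, ContinuousLinearMap.prod_apply,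
    ContinuousLinearMap.zero_apply, ContinuousLinearMap.proj_apply]
  have : ((v a.castSucc, 0, v a.succ) : V × V × V) = (v a.castSucc, 0, 0) + (0, 0, v a.succ) := by
    simp [Prod.ext_iff]
  rw [this, map_add]

lemma sum_shift (A : ℕ) (hA : 1 ≤ A) (f g h : ℕ → ℝ) :
    (∑ a ∈ Finset.Icc 1 (A - 1), (f a + g a + h (a - 1))) + (f 0 + g 0 + h (A - 1))
      = (∑ a ∈ Finset.range A, g a) + ∑ a ∈ Finset.range A, (f a + h a) := by
  obtain ⟨A', rfl⟩ : ∃ A', A = A' + 1 := ⟨A - 1, (Nat.succ_pred_eq_of_pos hA).symm⟩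
  simp only [Nat.add_sub_cancel]
  rw [← Finset.Ico_add_one_right_eq_Icc, Finset.sum_Ico_eq_sum_range]
  simp only [Nat.add_sub_cancel, Nat.add_sub_cancel_left, Nat.succ_sub_one]
  rw [Finset.sum_add_distrib, Finset.sum_add_distrib, Finset.sum_add_distrib,
    Finset.sum_range_succ' g, Finset.sum_range_succ' f, Finset.sum_range_succ h]
  simp only [Nat.add_comm 1]
  ring

/-- Covariant-to-evolutionary Noether bridge: with `B = 0`, `C = A-1`, the
global Noether quantity decomposes as the spatial boundary terms plus the
difference `𝖩⁺_{L_d}(𝛗^L,𝛗^{L+1}) - 𝖩⁻_{L_d}(𝛗^K,𝛗^{K+1})` of the discrete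
momentum maps of the time-evolution Lagrangian. -/
theorem covariant_Noether_bridge
    (N A : ℕ) (hA : 1 ≤ A)
    (Lag : ℕ → ℕ → V × V × V → ℝ) (hLag : ∀ j a, ContDiff ℝ (⊤ : ℕ∞) (Lag j a))
    (ξM : 𝔤 → V → V) (φ : ℕ → ℕ → V)
    (K L : ℕ) (hKL : K < L) (hL : L ≤ N - 1) :
    let tri : ℕ → ℕ → V × V × V := fun j a => (φ j a, φ (j + 1) a, φ j (a + 1))
    let J1 : ℕ → ℕ → 𝔤 → ℝ := fun j a ξ => (T1 (Lag j a) (tri j a)) (ξM ξ (φ j a))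
    let J2 : ℕ → ℕ → 𝔤 → ℝ := fun j a ξ => (T2 (Lag j a) (tri j a)) (ξM ξ (φ (j + 1) a))
    let J3 : ℕ → ℕ → 𝔤 → ℝ := fun j a ξ => (T3 (Lag j a) (tri j a)) (ξM ξ (φ j (a + 1)))
    let Ld : ℕ → ((Fin (A + 1) → V) × (Fin (A + 1) → V)) → ℝ := fun j p =>
      ∑ a : Fin A, Lag j a.1 (p.1 a.castSucc, p.2 a.castSucc, p.1 a.succ)
    let Φv : ℕ → Fin (A + 1) → V := fun j a => φ j a.1
    -- `⟨𝖩⁺_{L_d}(𝛗^j,𝛗^{j+1}), ξ⟩` and `⟨𝖩⁻_{L_d}(𝛗^j,𝛗^{j+1}), ξ⟩`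
    let Jplus : ℕ → 𝔤 → ℝ := fun j ξ =>
      (pD2 (Ld j) (Φv j, Φv (j + 1))) (fun a => ξM ξ (Φv (j + 1) a))
    let Jminus : ℕ → 𝔤 → ℝ := fun j ξ =>
      (-(pD1 (Ld j) (Φv j, Φv (j + 1)))) (fun a => ξM ξ (Φv j a))
    ∀ ξ : 𝔤,
      (∑ j ∈ Finset.Icc (K + 1) L, (J1 j 0 ξ + J2 (j - 1) 0 ξ + J3 j (A - 1) ξ)) +
      (∑ a ∈ Finset.Icc 1 (A - 1), (J1 K a ξ + J2 L a ξ + J3 K (a - 1) ξ)) +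
      (J1 K 0 ξ + J2 L 0 ξ + J3 K (A - 1) ξ) =
      (∑ j ∈ Finset.Icc (K + 1) L, (J1 j 0 ξ + J2 (j - 1) 0 ξ + J3 j (A - 1) ξ)) +
      (Jplus L ξ - Jminus K ξ) := by
  intro tri J1 J2 J3 Ld Φv Jplus Jminus ξ
  have hdiff : ∀ j a, Differentiable ℝ (Lag j a) := fun j a =>
    (hLag j a).differentiable (by simp)
  have hJp : Jplus L ξ = ∑ a ∈ Finset.range A, J2 L a ξ := by
    have h0 : Jplus L ξ = ∑ a : Fin A, J2 L a.1 ξ :=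
      pD2_sum_apply A (Lag L) (fun a => hdiff L a) (Φv L) (Φv (L + 1))
        (fun a => ξM ξ (Φv (L + 1) a))
    rw [h0]
    exact Fin.sum_univ_eq_sum_range (fun a => J2 L a ξ) A
  have hJm : Jminus K ξ = -∑ a ∈ Finset.range A, (J1 K a ξ + J3 K a ξ) := by
    have h0 : pD1 (Ld K) (Φv K, Φv (K + 1)) (fun a => ξM ξ (Φv K a))
        = ∑ a : Fin A, (J1 K a.1 ξ + J3 K a.1 ξ) :=
      pD1_sum_apply A (Lag K) (fun a => hdiff K a) (Φv K) (Φv (K + 1))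
        (fun a => ξM ξ (Φv K a))
    have h1 : Jminus K ξ
        = -(pD1 (Ld K) (Φv K, Φv (K + 1)) (fun a => ξM ξ (Φv K a))) :=
      ContinuousLinearMap.neg_apply _ _
    rw [h1, h0, Fin.sum_univ_eq_sum_range (fun a => J1 K a ξ + J3 K a ξ) A]
  rw [hJp, hJm, sub_neg_eq_add, add_assoc]
  congr 1
  exact sum_shift A hA (fun a => J1 K a ξ) (fun a => J2 L a ξ) (fun a => J3 K a ξ)

end
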